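/- Any separated sequence {z_n} in 𝔻 can be divided into finitely many subsequences 𝒵_1, ..., 𝒵_M such that for each j: the top part of any Carleson square contains at most one point of 𝒵_j, and there exists m ∈ {0,1,...,6} with 𝒵_j contained in the union over k ≥ 0 of the annuli {z : 2^{-m-7k} < 1-|z| ≤ 2^{-m-(7k-1)}}. -/

import Mathlib

/-- Pseudo-hyperbolic distance on the unit disc. -/
noncomputable def pd (z w : ℂ) : ℝ :=
  ‖z - w‖ / ‖1 - (starRingEnd ℂ) z * w‖

/-- Separation in the pseudo-hyperbolic metric. -/
def Separated (z : ℕ → ℂ) : Prop :=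
  ∃ δ : ℝ, 0 < δ ∧ δ < 1 ∧ ∀ n k : ℕ, n ≠ k → δ < pd (z n) (z k)

/-- The top part of the Carleson square over the arc `{e^{iθ} : a ≤ θ ≤ a + 2πℓ}` of
normalized length `ℓ`: radii `1 - ℓ ≤ r < 1 - ℓ/2`. -/
def topPart (a ℓ : ℝ) : Set ℂ :=
  {z | ∃ r θ : ℝ, 1 - ℓ ≤ r ∧ r < 1 - ℓ / 2 ∧ a ≤ θ ∧ θ ≤ a + 2 * Real.pi * ℓ ∧
    z = (r : ℂ) * Complex.exp (θ * Complex.I)}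

/-!
Colour a point `w` of the disc by its dyadic annulus index `I` modulo 7 together with the
coordinates, modulo a large `Q`, of its cell in the square grid of mesh `δ 2^(-I) / 2`.
Two points in the top part of one Carleson square lie in adjacent annuli, hence in the same
annulus if their colours agree, and they are then at Euclidean distance `≲ 2^(-I)`. Separation
puts them at distance `> δ 2^(-I)`, i.e. in different grid cells, and cells of equal colour
are at least `Q` cells apart, which is too far once `(Q - 1) δ ≥ 56`.
-/

open Complex

lemma abs_sub_lt_one_or_le_of_intCast_floor_eq {Q : ℕ} {u v : ℝ}
    (h : ((⌊u⌋ : ℤ) : ZMod Q) = ⌊v⌋) : |u - v| < 1 ∨ (Q : ℝ) - 1 ≤ |u - v| := by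
  by_cases huv : ⌊u⌋ = ⌊v⌋
  · exact Or.inl (Int.abs_sub_lt_one_of_floor_eq_floor huv)
  right
  have hdvd := (ZMod.intCast_eq_intCast_iff_dvd_sub _ _ _).mp h
  have hQ : (Q : ℤ) ≤ |⌊v⌋ - ⌊u⌋| :=
    Int.le_of_dvd (abs_pos.mpr (sub_ne_zero.mpr (Ne.symm huv))) ((dvd_abs _ _).mpr hdvd)
  have hQ' : (Q : ℝ) ≤ |(⌊v⌋ : ℝ) - ⌊u⌋| := by exact_mod_cast hQ
  have hfloor : |(⌊v⌋ : ℝ) - ⌊u⌋| ≤ |u - v| + 1 := by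
    have := Int.floor_le u
    have := Int.floor_le v
    have := Int.lt_floor_add_one u
    have := Int.lt_floor_add_one v
    exact abs_le.mpr ⟨by linarith [le_abs_self (u - v)], by linarith [neg_abs_le (u - v)]⟩
  linarith

lemma norm_sub_lt_or_le_of_intCast_floor_eq {Q : ℕ} {s : ℝ} (hs : 0 < s) {w w' : ℂ}
    (hre : ((⌊w.re / s⌋ : ℤ) : ZMod Q) = ⌊w'.re / s⌋)
    (him : ((⌊w.im / s⌋ : ℤ) : ZMod Q) = ⌊w'.im / s⌋) :
    ‖w - w'‖ < 2 * s ∨ ((Q : ℝ) - 1) * s ≤ ‖w - w'‖ := by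
  have scaled : ∀ x y : ℝ, ((⌊x / s⌋ : ℤ) : ZMod Q) = ⌊y / s⌋ →
      |x - y| < s ∨ ((Q : ℝ) - 1) * s ≤ |x - y| := by
    intro x y hxy
    have e : |x / s - y / s| = |x - y| / s := by
      rw [← sub_div, abs_div, abs_of_pos hs]
    rcases abs_sub_lt_one_or_le_of_intCast_floor_eq hxy with h | h
    · exact Or.inl (by rwa [e, div_lt_one hs] at h)
    · exact Or.inr (by rwa [e, le_div_iff₀ hs] at h)
  have hre' := abs_re_le_norm (w - w')
  have him' := abs_im_le_norm (w - w')
  rw [sub_re] at hre'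
  rw [sub_im] at him'
  rcases scaled _ _ hre with hx | hx
  · rcases scaled _ _ him with hy | hy
    · left
      calc ‖w - w'‖ ≤ |(w - w').re| + |(w - w').im| := norm_le_abs_re_add_abs_im _
        _ < 2 * s := by rw [sub_re, sub_im]; linarith
    · exact Or.inr (hy.trans him')
  · exact Or.inr (hx.trans hre')

lemma norm_exp_mul_I_sub_exp_mul_I_le (θ θ' : ℝ) :
    ‖exp (θ * I) - exp (θ' * I)‖ ≤ |θ - θ'| := by
  have e : exp (θ * I) - exp (θ' * I) = exp (θ' * I) * (exp (I * ↑(θ - θ')) - 1) := by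
    rw [mul_sub, ← exp_add, mul_one]
    push_cast
    ring_nf
  rw [e, norm_mul, norm_exp_ofReal_mul_I, one_mul, ← Real.norm_eq_abs]
  exact Real.norm_exp_I_mul_ofReal_sub_one_le

lemma one_sub_norm_mem_Ioc_of_mem_topPart {a ℓ : ℝ} {w : ℂ} (hℓ : ℓ ≤ 1)
    (hw : w ∈ topPart a ℓ) : 1 - ‖w‖ ∈ Set.Ioc (ℓ / 2) ℓ := by
  obtain ⟨r, θ, hr, hr', -, -, rfl⟩ := hw
  rw [norm_mul, norm_exp_ofReal_mul_I, mul_one, norm_real, Real.norm_of_nonneg (by linarith)]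
  constructor <;> linarith

lemma norm_sub_le_of_mem_topPart {a ℓ : ℝ} {w w' : ℂ} (hℓ : ℓ ≤ 1)
    (hw : w ∈ topPart a ℓ) (hw' : w' ∈ topPart a ℓ) : ‖w - w'‖ ≤ 7 * ℓ := by
  obtain ⟨r, θ, hr, hr', hθ, hθ', rfl⟩ := hw
  obtain ⟨ρ, φ, hρ, hρ', hφ, hφ', rfl⟩ := hw'
  have hρ0 : 0 ≤ ρ := by linarith
  have hsplit : (r : ℂ) * exp (θ * I) - ρ * exp (φ * I)
      = ((r - ρ : ℝ) : ℂ) * exp (θ * I) + ρ * (exp (θ * I) - exp (φ * I)) := by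
    push_cast; ring
  have hradial : ‖((r - ρ : ℝ) : ℂ) * exp (θ * I)‖ ≤ ℓ / 2 := by
    rw [norm_mul, norm_exp_ofReal_mul_I, mul_one, norm_real, Real.norm_eq_abs]
    exact abs_le.mpr ⟨by linarith, by linarith⟩
  have hangular : ‖(ρ : ℂ) * (exp (θ * I) - exp (φ * I))‖ ≤ 2 * Real.pi * ℓ := by
    rw [norm_mul, norm_real, Real.norm_of_nonneg hρ0]
    calc ρ * ‖exp (θ * I) - exp (φ * I)‖ ≤ 1 * |θ - φ| := by
          gcongr
          · linarith
          · exact norm_exp_mul_I_sub_exp_mul_I_le θ φ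
      _ ≤ 2 * Real.pi * ℓ := by rw [one_mul]; exact abs_le.mpr ⟨by linarith, by linarith⟩
  have hπ := Real.pi_lt_d2
  calc _ ≤ ℓ / 2 + 2 * Real.pi * ℓ :=
        hsplit ▸ (norm_add_le _ _).trans (add_le_add hradial hangular)
    _ ≤ 7 * ℓ := by nlinarith

lemma mul_one_sub_norm_lt_norm_sub_of_lt_pd {δ : ℝ} {w w' : ℂ} (hw : ‖w‖ ≤ 1)
    (hw' : ‖w'‖ < 1) (hδ : 0 ≤ δ) (hpd : δ < pd w w') : δ * (1 - ‖w'‖) < ‖w - w'‖ := by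
  have hden : 1 - ‖w'‖ ≤ ‖1 - (starRingEnd ℂ) w * w'‖ := by
    have := norm_sub_norm_le (1 : ℂ) ((starRingEnd ℂ) w * w')
    rw [norm_one, norm_mul, Complex.norm_conj] at this
    nlinarith [norm_nonneg w']
  have hden0 : 0 < ‖1 - (starRingEnd ℂ) w * w'‖ := by linarith
  rw [pd, lt_div_iff₀ hden0] at hpd
  nlinarith

noncomputable def ringIndex (w : ℂ) : ℤ := 1 - Int.clog 2 (1 - ‖w‖)

lemma ringIndex_spec {w : ℂ} (hw : ‖w‖ < 1) :
    (2 : ℝ) ^ (-ringIndex w) < 1 - ‖w‖ ∧ 1 - ‖w‖ ≤ (2 : ℝ) ^ (-(ringIndex w - 1)) := by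
  have hd : 0 < 1 - ‖w‖ := sub_pos.mpr hw
  have hlo := Int.zpow_pred_clog_lt_self (b := 2) one_lt_two hd
  have hhi := Int.self_le_zpow_clog (b := 2) one_lt_two (1 - ‖w‖)
  push_cast at hlo hhi
  rw [ringIndex, neg_sub, sub_sub_cancel_left, neg_neg]
  exact ⟨hlo, hhi⟩

lemma ringIndex_nonneg {w : ℂ} (hw : ‖w‖ < 1) : 0 ≤ ringIndex w := by
  have : Int.clog 2 (1 - ‖w‖) ≤ 1 := by
    rw [← Int.le_zpow_iff_clog_le one_lt_two (sub_pos.mpr hw)]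
    norm_num
    linarith [norm_nonneg w]
  rw [ringIndex]
  omega

lemma ringIndex_le_add_one {w w' : ℂ} (hw : ‖w‖ < 1) (hw' : ‖w'‖ < 1)
    (h : 1 - ‖w'‖ ≤ 2 * (1 - ‖w‖)) : ringIndex w ≤ ringIndex w' + 1 := by
  have e : (2 : ℝ) * 2 ^ (-(ringIndex w - 1)) = 2 ^ (2 - ringIndex w) := by
    rw [← zpow_one_add₀ two_ne_zero]; ring_nf
  have hlt : (2 : ℝ) ^ (-ringIndex w') < 2 ^ (2 - ringIndex w) := by
    linarith [(ringIndex_spec hw).2, (ringIndex_spec hw').1]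
  have := (zpow_lt_zpow_iff_right₀ one_lt_two).mp hlt
  omega

lemma exists_eq_val_intCast_add_mul {n : ℕ} [NeZero n] {I : ℤ} (hI : 0 ≤ I) :
    ∃ k : ℕ, I = ((I : ZMod n).val : ℤ) + n * k := by
  refine ⟨(I / n).toNat, ?_⟩
  rw [ZMod.val_intCast, Int.toNat_of_nonneg (Int.ediv_nonneg hI (Int.natCast_nonneg n))]
  exact (Int.emod_add_mul_ediv I n).symm

noncomputable def gridMesh (δ : ℝ) (w : ℂ) : ℝ := δ * 2 ^ (-ringIndex w) / 2

noncomputable def colour (Q : ℕ) (δ : ℝ) (w : ℂ) : ZMod 7 × ZMod Q × ZMod Q :=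
  (ringIndex w, ⌊w.re / gridMesh δ w⌋, ⌊w.im / gridMesh δ w⌋)

lemma colour_ne_of_mem_topPart {Q : ℕ} {δ a ℓ : ℝ} {w w' : ℂ} (hδ : 0 < δ)
    (hQ : 56 ≤ ((Q : ℝ) - 1) * δ) (hw : ‖w‖ < 1) (hw' : ‖w'‖ < 1) (hpd : δ < pd w w')
    (hℓ : ℓ ≤ 1) (hmem : w ∈ topPart a ℓ) (hmem' : w' ∈ topPart a ℓ) :
    colour Q δ w ≠ colour Q δ w' := by
  intro h
  simp only [colour, Prod.mk.injEq] at h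
  obtain ⟨hI7, hre, him⟩ := h
  obtain ⟨hd, hd'⟩ := one_sub_norm_mem_Ioc_of_mem_topPart hℓ hmem
  obtain ⟨he, he'⟩ := one_sub_norm_mem_Ioc_of_mem_topPart hℓ hmem'
  have hI : ringIndex w' = ringIndex w := by
    have := ringIndex_le_add_one hw hw' (by linarith)
    have := ringIndex_le_add_one hw' hw (by linarith)
    have := (ZMod.intCast_eq_intCast_iff_dvd_sub _ _ 7).mp hI7
    omega
  rw [show gridMesh δ w' = gridMesh δ w by rw [gridMesh, gridMesh, hI]] at hre him
  set A : ℝ := 2 ^ (-ringIndex w) with hA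
  have hA0 : 0 < A := by positivity
  have hdA : 1 - ‖w‖ ≤ 2 * A := by
    have := (ringIndex_spec hw).2
    rwa [show -(ringIndex w - 1) = 1 + -ringIndex w by ring, zpow_add₀ two_ne_zero,
      zpow_one] at this
  have hAd' : A < 1 - ‖w'‖ := by simpa only [hI] using (ringIndex_spec hw').1
  have hfar : δ * A < ‖w - w'‖ :=
    (mul_lt_mul_of_pos_left hAd' hδ).trans
      (mul_one_sub_norm_lt_norm_sub_of_lt_pd hw.le hw' hδ.le hpd)
  have hnear : ‖w - w'‖ < 28 * A := by
    linarith [norm_sub_le_of_mem_topPart hℓ hmem hmem']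
  rcases norm_sub_lt_or_le_of_intCast_floor_eq (by unfold gridMesh; positivity) hre him
    with h | h
  · rw [gridMesh] at h
    linarith
  · rw [gridMesh] at h
    nlinarith

theorem separated_seq_splits (z : ℕ → ℂ) (hz : ∀ n, ‖z n‖ < 1)
    (hsep : Separated z) :
    ∃ (M : ℕ) (F : ℕ → Fin M), ∀ j : Fin M,
      (∀ a ℓ : ℝ, 0 < ℓ → ℓ ≤ 1 → ∀ n n' : ℕ, F n = j → F n' = j →
        z n ∈ topPart a ℓ → z n' ∈ topPart a ℓ → z n = z n') ∧
      ∃ m : ℕ, m ≤ 6 ∧ ∀ n : ℕ, F n = j → ∃ k : ℕ,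
        (2 : ℝ) ^ (-((m : ℤ) + 7 * k)) < 1 - ‖z n‖ ∧
        1 - ‖z n‖ ≤ (2 : ℝ) ^ (-((m : ℤ) + 7 * k - 1)) := by
  obtain ⟨δ, hδ, -, hsep⟩ := hsep
  obtain ⟨Q, hQ⟩ := exists_nat_gt (56 / δ + 1)
  have hQδ : 56 ≤ ((Q : ℝ) - 1) * δ := by rw [← div_le_iff₀ hδ]; linarith
  have : NeZero Q :=
    NeZero.of_pos (by exact_mod_cast (by positivity : (0 : ℝ) < 56 / δ + 1).trans hQ)
  let e := Fintype.equivFin (ZMod 7 × ZMod Q × ZMod Q)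
  refine ⟨_, fun n => e (colour Q δ (z n)), fun j => ⟨?_, (e.symm j).1.val,
    Nat.le_of_lt_succ (ZMod.val_lt _), ?_⟩⟩
  · intro a ℓ _ hℓ n n' hn hn' hmem hmem'
    obtain rfl | hne := eq_or_ne n n'
    · rfl
    exact absurd (e.injective (hn.trans hn'.symm))
      (colour_ne_of_mem_topPart hδ hQδ (hz n) (hz n') (hsep n n' hne) hℓ hmem hmem')
  · intro n hn
    have hcol : (e.symm j).1 = ringIndex (z n) := by rw [← hn, e.symm_apply_apply]; rfl
    obtain ⟨k, hk⟩ := exists_eq_val_intCast_add_mul (n := 7) (ringIndex_nonneg (hz n))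
    refine ⟨k, ?_⟩
    rw [hcol, ← Nat.cast_ofNat (R := ℤ) (n := 7), ← hk]
    exact ringIndex_spec (hz n)
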